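/- arXiv:2409.12802 — 2 statements merged into one kernel-verified Lean document; each statement's English description precedes it below -/
import Mathlib

section
/- Let ∅ ≠ I ⊆ 𝓘 and let β ∈ Δ be a root with ht_I(β) = 1 and ht_{I^c}(β) > 0. Then there exists j ∈ I^c ∩ supp(β) with β − α_j ∈ Δ and ht_I(β − α_j) = 1. Consequently there is a chain of roots β = β_1, β_2, …, β_m, all lying in Δ_{I,1}, with m = ht(β), β_t − β_{t+1} ∈ Π_{I^c} for all 1 ≤ t ≤ m−1 (so the chain strictly decreases and terminates at the simple root β_m = α_i, where {i} = I ∩ supp(β)). -/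
open scoped BigOperators

attribute [local instance] Classical.propDecidable

namespace KM

/-- The set of `ℤ≥0`-linear combinations of elements of `S`. -/
def cone {W : Type} [AddCommMonoid W] (S : Set W) : Set W :=
  (AddSubmonoid.closure S : AddSubmonoid W)

/-- Minkowski difference of two sets. -/
def mdiff {W : Type} [Sub W] (A B : Set W) : Set W :=
  {x | ∃ a ∈ A, ∃ b ∈ B, x = a - b}

variable {g : Type} [LieRing g] [LieAlgebra ℂ g]

/-- The `μ`-weight space of a `g`-module `V` with respect to a Cartan subalgebra `H`. -/
def wtSpace (H : LieSubalgebra ℂ g) (V : Type) [AddCommGroup V] [Module ℂ V]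
    [LieRingModule g V] [LieModule ℂ g V] (μ : Module.Dual ℂ H) : Submodule ℂ V where
  carrier := {w | ∀ h : H, ⁅(h : g), w⁆ = μ h • w}
  add_mem' := by
    intro a b ha hb h
    rw [lie_add, ha h, hb h, smul_add]
  zero_mem' := by
    intro h
    rw [lie_zero, smul_zero]
  smul_mem' := by
    intro t w hw h
    rw [lie_smul, hw h, smul_smul, smul_smul, mul_comm]

/-- The set of weights of a `g`-module `V`. -/
def wtSet (H : LieSubalgebra ℂ g) (V : Type) [AddCommGroup V] [Module ℂ V]
    [LieRingModule g V] [LieModule ℂ g V] : Set (Module.Dual ℂ H) :=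
  {μ | wtSpace H V μ ≠ ⊥}

/-- Iterated action `x^n · w` of an element `x : g` on a module vector. -/
def actPow {V : Type} [AddCommGroup V] [LieRingModule g V] (x : g) (n : ℕ) (w : V) : V :=
  (fun u => ⁅x, u⁆)^[n] w

/-- The data of a Kac--Moody Lie algebra `g` attached to a generalized Cartan matrix `A`,
with Cartan subalgebra `H`, simple roots `α`, simple coroots `coroot`, and Chevalley
generators `e`, `f`. -/
structure Data (𝓘 : Type) (g : Type) [LieRing g] [LieAlgebra ℂ g] where
  H : LieSubalgebra ℂ g
  α : 𝓘 → Module.Dual ℂ H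
  coroot : 𝓘 → H
  e : 𝓘 → g
  f : 𝓘 → g
  A : 𝓘 → 𝓘 → ℤ
  pairing_eq : ∀ i j, α i (coroot j) = (A j i : ℂ)
  A_diag : ∀ i, A i i = 2
  A_offdiag : ∀ i j, i ≠ j → A i j ≤ 0
  A_zero_iff : ∀ i j, A i j = 0 ↔ A j i = 0
  indepSimple : LinearIndependent ℂ α
  cartan_abelian : ∀ h h' : H, ⁅(h : g), (h' : g)⁆ = 0
  lie_h_e : ∀ (h : H) (i : 𝓘), ⁅(h : g), e i⁆ = α i h • e i
  lie_h_f : ∀ (h : H) (i : 𝓘), ⁅(h : g), f i⁆ = -(α i h) • f i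
  lie_e_f_same : ∀ i, ⁅e i, f i⁆ = (coroot i : g)
  lie_e_f_ne : ∀ i j, i ≠ j → ⁅e i, f j⁆ = 0
  serre_e : ∀ i j, i ≠ j → ((LieAlgebra.ad ℂ g (e i)) ^ (1 - A i j).toNat) (e j) = 0
  serre_f : ∀ i j, i ≠ j → ((LieAlgebra.ad ℂ g (f i)) ^ (1 - A i j).toNat) (f j) = 0
  generates : LieSubalgebra.lieSpan ℂ g ((H : Set g) ∪ Set.range e ∪ Set.range f) = ⊤
  rootDecomp : (⨆ μ : Module.Dual ℂ H, wtSpace H g μ) = ⊤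
  zeroWtSpace : wtSpace H g (0 : Module.Dual ℂ H) = H.toSubmodule
  root_pm : ∀ μ : Module.Dual ℂ H, μ ≠ 0 → wtSpace H g μ ≠ ⊥ →
      μ ∈ cone (Set.range α) ∨ -μ ∈ cone (Set.range α)

variable {𝓘 : Type}

/-- `V` is a highest weight `g`-module with highest weight `lam` and highest weight
vector `v`; equivalently, `V` is a nonzero quotient of the Verma module `M(lam)`. -/
def IsHW (D : Data 𝓘 g) (V : Type) [AddCommGroup V] [Module ℂ V] [LieRingModule g V]
    [LieModule ℂ g V] (lam : Module.Dual ℂ D.H) (v : V) : Prop :=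
  v ≠ 0 ∧ v ∈ wtSpace D.H V lam ∧ (∀ i : 𝓘, ⁅D.e i, v⁆ = 0) ∧
    LieSubmodule.lieSpan ℂ g {v} = ⊤

/-- `J_λ`, the set of integrable directions of `lam`. -/
def Jlam (D : Data 𝓘 g) (lam : Module.Dual ℂ D.H) : Set 𝓘 :=
  {i | ∃ n : ℕ, lam (D.coroot i) = (n : ℂ)}

/-- `Π_J`, the simple roots indexed by `J`. -/
def PiJ (D : Data 𝓘 g) (J : Set 𝓘) : Set (Module.Dual ℂ D.H) := D.α '' J

/-- The root system `Δ` of `g`. -/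
def roots (D : Data 𝓘 g) : Set (Module.Dual ℂ D.H) :=
  {μ | μ ≠ 0 ∧ wtSpace D.H g μ ≠ ⊥}

/-- The positive roots `Δ⁺`. -/
def posRoots (D : Data 𝓘 g) : Set (Module.Dual ℂ D.H) :=
  roots D ∩ cone (Set.range D.α)

/-- The positive roots `Δ⁺_J` of the parabolic subroot system `Δ_J = Δ ∩ ℤΠ_J`. -/
def posRootsJ (D : Data 𝓘 g) (J : Set 𝓘) : Set (Module.Dual ℂ D.H) :=
  posRoots D ∩ (Submodule.span ℤ (D.α '' J) : Set (Module.Dual ℂ D.H))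

/-- `wt_J V := wt V ∩ (λ − ℤ≥0 Π_J)`. -/
def wtJ (D : Data 𝓘 g) (V : Type) [AddCommGroup V] [Module ℂ V] [LieRingModule g V]
    [LieModule ℂ g V] (lam : Module.Dual ℂ D.H) (J : Set 𝓘) : Set (Module.Dual ℂ D.H) :=
  wtSet D.H V ∩ {μ | ∃ x ∈ cone (PiJ D J), μ = lam - x}

/-- A subset `S` of nodes is independent if its induced Dynkin subdiagram has no edges. -/
def IndepSet (D : Data 𝓘 g) (S : Set 𝓘) : Prop :=
  ∀ i ∈ S, ∀ j ∈ S, i ≠ j → D.α i (D.coroot j) = 0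

/-- `J_V`: the union of all minimal independent subsets `I ⊆ J_λ` with
`λ − Σ_{i∈I} (λ(α_i^∨)+1)α_i ∉ wt V`. -/
def JV (D : Data 𝓘 g) (V : Type) [AddCommGroup V] [Module ℂ V] [LieRingModule g V]
    [LieModule ℂ g V] (lam : Module.Dual ℂ D.H) : Set 𝓘 :=
  {i | ∃ I : Finset 𝓘, (↑I : Set 𝓘) ⊆ Jlam D lam ∧ IndepSet D (↑I : Set 𝓘) ∧
    (lam - ∑ k ∈ I, (lam (D.coroot k) + 1) • D.α k) ∉ wtSet D.H V ∧
    (∀ K : Finset 𝓘, K ⊂ I →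
      (lam - ∑ k ∈ K, (lam (D.coroot k) + 1) • D.α k) ∈ wtSet D.H V) ∧
    i ∈ I}

/-- `γ ∈ Δ_{I,1}`, i.e. `γ` is a root of `I`-height `1`. -/
def InDeltaI1 (D : Data 𝓘 g) [Fintype 𝓘] (I : Set 𝓘) (γ : Module.Dual ℂ D.H) : Prop :=
  γ ∈ roots D ∧ ∃ d : 𝓘 → ℕ, γ = ∑ k, (d k : ℂ) • D.α k ∧
    ∑ k ∈ Finset.univ.filter (fun k => k ∈ I), d k = 1

/-!
Suppose `β - α_j ∉ Δ` for every `j ∉ I` with `c_j ≠ 0`. Then `𝔤_{β-α_j} = 0` for all `j ∉ I`: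
when `c_j = 0`, the coefficients of `β - α_j` at `j` and at the node `i ∈ I ∩ supp β` have
opposite signs. As `𝔤 = 𝔥 + 𝔫⁺ + 𝔫⁻`, with `𝔫^±` spanned by right-normed brackets of the
Chevalley generators, and weight spaces are independent, `𝔤_β` is spanned by the brackets
`[e_{j₁}, [e_{j₂}, …, e_{jₘ}]]` of weight `β`; exactly one letter of such a bracket lies in `I`.
If the outer letter is outside `I`, the inner bracket lies in `𝔤_{β-α_{j₁}} = 0`. Otherwise
every other letter is outside `I`, and the Jacobi identity moves `e_{j₁}` inwards into weight
spaces `𝔤_{β-α_j}`, `j ∉ I`, so the bracket vanishes again. Hence `𝔤_β = 0`, a contradiction.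
Since `β - α_j` again has `I`-height one, iterating gives the chain.
-/

open LieAlgebra

section WeightSpace

variable {H : LieSubalgebra ℂ g}

lemma lie_mem_wtSpace_add {μ ν : Module.Dual ℂ H} {u v : g} (hu : u ∈ wtSpace H g μ)
    (hv : v ∈ wtSpace H g ν) : ⁅u, v⁆ ∈ wtSpace H g (μ + ν) := by
  intro h
  rw [leibniz_lie, hu h, hv h, smul_lie, lie_smul, LinearMap.add_apply, add_smul]

lemma lie_eq_smul_of_mem_wtSpace {μ : Module.Dual ℂ H} {u a : g} (hu : u ∈ wtSpace H g μ)
    (ha : a ∈ H) : ⁅a, u⁆ = μ ⟨a, ha⟩ • u :=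
  hu ⟨a, ha⟩

lemma wtSpace_le_iInf_maxGenEigenspace (μ : Module.Dual ℂ H) :
    wtSpace H g μ ≤ ⨅ h : H, (ad ℂ g (h : g)).maxGenEigenspace (μ h) :=
  le_iInf fun h _ hx => Module.End.eigenspace_le_maxGenEigenspace
    (Module.End.mem_eigenspace_iff.2 (hx h))

lemma iSupIndep_wtSpace (hH : ∀ h h' : H, ⁅(h : g), (h' : g)⁆ = 0) :
    iSupIndep (wtSpace H g) := by
  have hcomm (h h' : H) : Commute (ad ℂ g (h : g)) (ad ℂ g (h' : g)) := by
    refine LinearMap.ext fun x => ?_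
    change ⁅(h : g), ⁅(h' : g), x⁆⁆ = ⁅(h' : g), ⁅(h : g), x⁆⁆
    rw [leibniz_lie, hH, zero_lie, zero_add]
  have hindep := Module.End.independent_iInf_maxGenEigenspace_of_forall_mapsTo
    (fun h : H => ad ℂ g (h : g))
    fun h h' φ => Module.End.mapsTo_maxGenEigenspace_of_comm (hcomm h' h) φ
  exact (hindep.comp DFunLike.coe_injective).mono wtSpace_le_iInf_maxGenEigenspace

end WeightSpace

section BracketWord

variable {H : LieSubalgebra ℂ g} {x y : 𝓘 → g} {w w' : 𝓘 → Module.Dual ℂ H}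

def bracketWord (x : 𝓘 → g) (i : 𝓘) (l : List 𝓘) : g :=
  l.foldr (fun j v => ⁅x j, v⁆) (x i)

lemma bracketWord_mem_wtSpace (hx : ∀ i, x i ∈ wtSpace H g (w i)) (i : 𝓘) :
    ∀ l, bracketWord x i l ∈ wtSpace H g ((i :: l).map w).sum
  | [] => by simpa [bracketWord] using hx i
  | j :: l => by
    rw [show ((i :: j :: l).map w).sum = w j + ((i :: l).map w).sum by simp [add_left_comm]]
    exact lie_mem_wtSpace_add (hx j) (bracketWord_mem_wtSpace hx i l)

def wordSpan (x : 𝓘 → g) : Submodule ℂ g :=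
  Submodule.span ℂ {v | ∃ i l, bracketWord x i l = v}

lemma bracketWord_mem_wordSpan (x : 𝓘 → g) (i : 𝓘) (l : List 𝓘) :
    bracketWord x i l ∈ wordSpan x :=
  Submodule.subset_span ⟨i, l, rfl⟩

lemma wordSpan_le_comap_ad (x : 𝓘 → g) (j : 𝓘) :
    wordSpan x ≤ (wordSpan x).comap (ad ℂ g (x j)) :=
  Submodule.span_le.2 fun _ ⟨i, l, hv⟩ => hv ▸ bracketWord_mem_wordSpan x i (j :: l)

lemma wordSpan_le_comap_ad_of_mem (hx : ∀ i, x i ∈ wtSpace H g (w i)) {a : g} (ha : a ∈ H) :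
    wordSpan x ≤ (wordSpan x).comap (ad ℂ g a) :=
  Submodule.span_le.2 fun _ ⟨i, l, hv⟩ => by
    subst hv
    change ⁅a, bracketWord x i l⁆ ∈ wordSpan x
    rw [lie_eq_smul_of_mem_wtSpace (bracketWord_mem_wtSpace hx i l) ha]
    exact Submodule.smul_mem _ _ (bracketWord_mem_wordSpan x i l)

lemma toSubmodule_le_comap_ad (hx : ∀ i, x i ∈ wtSpace H g (w i)) (j : 𝓘) :
    H.toSubmodule ≤ (wordSpan x).comap (ad ℂ g (x j)) := fun a ha => by
  change ⁅x j, a⁆ ∈ wordSpan x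
  rw [← lie_skew, lie_eq_smul_of_mem_wtSpace (hx j) ha]
  exact neg_mem (Submodule.smul_mem _ _ (bracketWord_mem_wordSpan x j []))

lemma lie_bracketWord_mem_sup_wordSpan (hx : ∀ i, x i ∈ wtSpace H g (w i))
    (hyx : ∀ i j, ⁅y i, x j⁆ ∈ H) (j i : 𝓘) :
    ∀ l, ⁅y j, bracketWord x i l⁆ ∈ H.toSubmodule ⊔ wordSpan x
  | [] => Submodule.mem_sup_left (hyx j i)
  | k :: l => by
    change ⁅y j, ⁅x k, bracketWord x i l⁆⁆ ∈ _
    rw [leibniz_lie]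
    refine add_mem (Submodule.mem_sup_right ?_) (Submodule.mem_sup_right ?_)
    · rw [lie_eq_smul_of_mem_wtSpace (bracketWord_mem_wtSpace hx i l) (hyx j k)]
      exact Submodule.smul_mem _ _ (bracketWord_mem_wordSpan x i l)
    · exact sup_le (toSubmodule_le_comap_ad hx k) (wordSpan_le_comap_ad x k)
        (lie_bracketWord_mem_sup_wordSpan hx hyx j i l)

lemma sup_wordSpan_le_comap_ad (hx : ∀ i, x i ∈ wtSpace H g (w i))
    (hy : ∀ i, y i ∈ wtSpace H g (w' i)) (hxy : ∀ i j, ⁅x i, y j⁆ ∈ H) (j : 𝓘) :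
    H.toSubmodule ⊔ wordSpan x ⊔ wordSpan y ≤
      (H.toSubmodule ⊔ wordSpan x ⊔ wordSpan y).comap (ad ℂ g (x j)) := by
  have hHx : H.toSubmodule ⊔ wordSpan x ≤ (wordSpan x).comap (ad ℂ g (x j)) :=
    sup_le (toSubmodule_le_comap_ad hx j) (wordSpan_le_comap_ad x j)
  refine sup_le (hHx.trans (Submodule.comap_mono (le_sup_right.trans le_sup_left)))
    (Submodule.span_le.2 ?_)
  rintro _ ⟨i, l, rfl⟩
  exact (sup_le_sup_right le_sup_left _ : H.toSubmodule ⊔ wordSpan y ≤ _)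
    (lie_bracketWord_mem_sup_wordSpan hy hxy j i l)

lemma lie_bracketWord_eq_zero (hx : ∀ i, x i ∈ wtSpace H g (w i)) {J : Set 𝓘}
    {β : Module.Dual ℂ H} (hJ : ∀ j ∈ J, wtSpace H g (β - w j) = ⊥) (i : 𝓘) (hi : i ∈ J) :
    ∀ l : List 𝓘, (∀ k ∈ l, k ∈ J) → ∀ u ∈ wtSpace H g (β - ((i :: l).map w).sum),
      ⁅u, bracketWord x i l⁆ = 0
  | [], _, u, hu => by
    rw [List.map_singleton, List.sum_singleton, hJ i hi, Submodule.mem_bot] at hu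
    rw [hu, zero_lie]
  | j :: l, hl, u, hu => by
    have hux : ⁅u, x j⁆ ∈ wtSpace H g (β - ((i :: l).map w).sum) := by
      convert lie_mem_wtSpace_add hu (hx j) using 2
      simp only [List.map_cons, List.sum_cons]
      abel
    have huW : ⁅u, bracketWord x i l⁆ ∈ wtSpace H g (β - w j) := by
      convert lie_mem_wtSpace_add hu (bracketWord_mem_wtSpace hx i l) using 2
      simp only [List.map_cons, List.sum_cons]
      abel
    rw [hJ j (hl j List.mem_cons_self), Submodule.mem_bot] at huW
    change ⁅u, ⁅x j, bracketWord x i l⁆⁆ = 0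
    rw [leibniz_lie, huW, lie_zero, add_zero,
      lie_bracketWord_eq_zero hx hJ i hi l (fun k hk => hl k (List.mem_cons_of_mem j hk)) _ hux]

lemma bracketWord_eq_zero_of_countP_eq_one (hx : ∀ i, x i ∈ wtSpace H g (w i)) {I : Set 𝓘}
    (i : 𝓘) (l : List 𝓘) (hJ : ∀ j ∉ I, wtSpace H g (((i :: l).map w).sum - w j) = ⊥)
    (hI : (i :: l).countP (· ∈ I) = 1) (hIc : ∃ k ∈ i :: l, k ∉ I) :
    bracketWord x i l = 0 := by
  cases l with
  | nil =>
    obtain ⟨k, hk, hkI⟩ := hIc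
    rw [List.mem_singleton] at hk
    subst hk
    simp [hkI] at hI
  | cons j l =>
    change ⁅x j, bracketWord x i l⁆ = 0
    by_cases hj : j ∈ I
    · have hl : ∀ k ∈ i :: l, k ∉ I := by
        refine fun k hk hkI => ?_
        have hpos : 0 < (i :: l).countP (· ∈ I) :=
          List.countP_pos_iff.2 ⟨k, hk, by simpa using hkI⟩
        rw [(List.Perm.swap j i l).countP_eq, List.countP_cons_of_pos (by simpa using hj)]
          at hI
        omega
      refine lie_bracketWord_eq_zero hx (J := Iᶜ) hJ i (hl i List.mem_cons_self) l
        (fun k hk => hl k (List.mem_cons_of_mem i hk)) _ ?_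
      convert hx j using 2
      simp only [List.map_cons, List.sum_cons]
      abel
    · have hW := bracketWord_mem_wtSpace hx i l
      rw [show ((i :: l).map w).sum = ((i :: j :: l).map w).sum - w j by simp; abel, hJ j hj,
        Submodule.mem_bot] at hW
      rw [hW, lie_zero]

end BracketWord

lemma eq_top_of_le_comap_ad {S : Set g} (hS : LieSubalgebra.lieSpan ℂ g S = ⊤)
    {T : Submodule ℂ g} (hST : S ⊆ T) (hT : ∀ s ∈ S, T ≤ T.comap (ad ℂ g s)) : T = ⊤ := by
  have hnorm (a : g) : T ≤ T.comap (ad ℂ g a) := by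
    have ha : a ∈ LieSubalgebra.lieSpan ℂ g S := hS ▸ LieSubalgebra.mem_top a
    induction ha using LieSubalgebra.lieSpan_induction with
    | mem s hs => exact hT s hs
    | zero =>
      intro t _
      change ⁅0, t⁆ ∈ T
      rw [zero_lie]
      exact zero_mem T
    | add a b _ _ iha ihb =>
      intro t ht
      change ⁅a + b, t⁆ ∈ T
      rw [add_lie]
      exact add_mem (iha ht) (ihb ht)
    | smul r a _ ih =>
      intro t ht
      change ⁅r • a, t⁆ ∈ T
      rw [smul_lie]
      exact T.smul_mem r (ih ht)
    | lie a b _ _ iha ihb =>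
      intro t ht
      change ⁅⁅a, b⁆, t⁆ ∈ T
      rw [lie_lie]
      exact sub_mem (iha (ihb ht)) (ihb (iha ht))
  refine Submodule.eq_top_iff'.2 fun a => ?_
  have ha : a ∈ LieSubalgebra.lieSpan ℂ g S := hS ▸ LieSubalgebra.mem_top a
  induction ha using LieSubalgebra.lieSpan_induction with
  | mem s hs => exact hST hs
  | zero => exact zero_mem T
  | add a b _ _ iha ihb => exact add_mem iha ihb
  | smul r a _ ih => exact Submodule.smul_mem _ r ih
  | lie a b _ _ _ ihb => exact hnorm a ihb

section Triangular

variable (D : Data 𝓘 g)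

lemma e_mem_wtSpace (i : 𝓘) : D.e i ∈ wtSpace D.H g (D.α i) := fun h => D.lie_h_e h i

lemma f_mem_wtSpace (i : 𝓘) : D.f i ∈ wtSpace D.H g (-D.α i) := fun h => by
  simp [D.lie_h_f h i]

lemma lie_e_f_mem (i j : 𝓘) : ⁅D.e i, D.f j⁆ ∈ D.H := by
  by_cases hij : i = j
  · subst hij
    simp [D.lie_e_f_same]
  · simp [D.lie_e_f_ne i j hij]

lemma sup_wordSpan_eq_top : D.H.toSubmodule ⊔ wordSpan D.e ⊔ wordSpan D.f = ⊤ := by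
  have hfe (i j : 𝓘) : ⁅D.f i, D.e j⁆ ∈ D.H := by
    rw [← lie_skew]
    exact neg_mem (lie_e_f_mem D j i)
  refine eq_top_of_le_comap_ad D.generates ?_ ?_
  · rintro s ((hs | ⟨i, rfl⟩) | ⟨i, rfl⟩)
    · exact Submodule.mem_sup_left (Submodule.mem_sup_left hs)
    · exact Submodule.mem_sup_left (Submodule.mem_sup_right (bracketWord_mem_wordSpan D.e i []))
    · exact Submodule.mem_sup_right (bracketWord_mem_wordSpan D.f i [])
  · rintro s ((hs | ⟨i, rfl⟩) | ⟨i, rfl⟩)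
    · refine sup_le (sup_le (fun a ha => ?_) ?_) ?_
      · change ⁅s, a⁆ ∈ D.H.toSubmodule ⊔ wordSpan D.e ⊔ wordSpan D.f
        rw [D.cartan_abelian ⟨s, hs⟩ ⟨a, ha⟩]
        exact zero_mem _
      · exact (wordSpan_le_comap_ad_of_mem (e_mem_wtSpace D) hs).trans
          (Submodule.comap_mono (le_sup_right.trans le_sup_left))
      · exact (wordSpan_le_comap_ad_of_mem (f_mem_wtSpace D) hs).trans
          (Submodule.comap_mono le_sup_right)
    · exact sup_wordSpan_le_comap_ad (e_mem_wtSpace D) (f_mem_wtSpace D) (lie_e_f_mem D) i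
    · rw [sup_right_comm]
      exact sup_wordSpan_le_comap_ad (f_mem_wtSpace D) (e_mem_wtSpace D) hfe i

end Triangular

section ListCount

variable [Fintype 𝓘]

lemma sum_map_eq_sum_count_smul {M : Type*} [AddCommMonoid M] (L : List 𝓘) (v : 𝓘 → M) :
    (L.map v).sum = ∑ k, L.count k • v k := by
  rw [Finset.sum_list_map_count, Finset.sum_subset (Finset.subset_univ _)]
  intro k _ hk
  rw [List.count_eq_zero_of_not_mem (by simpa using hk), zero_smul]

lemma countP_mem_eq_sum_count (L : List 𝓘) (I : Set 𝓘) :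
    L.countP (· ∈ I) = ∑ k ∈ Finset.univ.filter (· ∈ I), L.count k := by
  rw [← Finset.sum_filter_count_eq_countP]
  refine Finset.sum_subset (fun k hk => ?_) fun k hkI hk => ?_
  · simp only [Finset.mem_filter] at hk ⊢
    exact ⟨Finset.mem_univ k, hk.2⟩
  · simp only [Finset.mem_filter, Finset.mem_univ, true_and, List.mem_toFinset, not_and] at hkI hk
    exact List.count_eq_zero_of_not_mem fun hkL => hk hkL hkI

end ListCount

section Roots

variable [Fintype 𝓘] (D : Data 𝓘 g)

lemma wtSpace_eq_bot_of_coeff_neg_of_coeff_pos (r : 𝓘 → ℤ) {a b : 𝓘} (ha : r a < 0)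
    (hb : 0 < r b) : wtSpace D.H g (∑ k, (r k : ℂ) • D.α k) = ⊥ := by
  have hcoeff := Fintype.linearIndependent_iffₛ.1 D.indepSimple
  by_contra hne
  have hne0 : ∑ k, (r k : ℂ) • D.α k ≠ 0 := by
    intro h0
    have := hcoeff (fun k => (r k : ℂ)) 0 (by simpa using h0) a
    simp only [Pi.zero_apply, Int.cast_eq_zero] at this
    omega
  rcases D.root_pm _ hne0 hne with hpos | hneg
  · obtain ⟨n, hn⟩ := AddSubmonoid.mem_closure_range_iff_of_fintype.1 hpos
    have := hcoeff (fun k => (r k : ℂ)) (fun k => ((n k : ℤ) : ℂ))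
      (by simpa [Nat.cast_smul_eq_nsmul] using hn) a
    have : r a = n a := by exact_mod_cast this
    omega
  · obtain ⟨n, hn⟩ := AddSubmonoid.mem_closure_range_iff_of_fintype.1 hneg
    have := hcoeff (fun k => ((-r k : ℤ) : ℂ)) (fun k => ((n k : ℤ) : ℂ))
      (by simpa [Nat.cast_smul_eq_nsmul, ← Finset.sum_neg_distrib] using hn) b
    have : -r b = n b := by exact_mod_cast this
    omega

lemma wtSpace_eq_bot_of_bracketWord_eq_zero (c : 𝓘 → ℕ) (hc : c ≠ 0)
    (he : ∀ i l, ((i :: l).map D.α).sum = ∑ k, (c k : ℂ) • D.α k → bracketWord D.e i l = 0) :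
    wtSpace D.H g (∑ k, (c k : ℂ) • D.α k) = ⊥ := by
  set β := ∑ k, (c k : ℂ) • D.α k with hβ
  have hcoeff := Fintype.linearIndependent_iffₛ.1 D.indepSimple
  have hβ0 : β ≠ 0 := by
    obtain ⟨a, ha⟩ := Function.ne_iff.1 hc
    intro h0
    have := hcoeff (fun k => (c k : ℂ)) 0 (by rw [← hβ, h0]; simp) a
    exact ha (by simpa using this)
  have hf (i : 𝓘) (l : List 𝓘) : ((i :: l).map fun k => -D.α k).sum ≠ β := by
    intro h
    rw [sum_map_eq_sum_count_smul] at h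
    have := hcoeff (fun k => ((-((i :: l).count k : ℤ) : ℤ) : ℂ)) (fun k => ((c k : ℤ) : ℂ))
      (by simpa [← Nat.cast_smul_eq_nsmul ℂ] using h) i
    have : -((i :: l).count i : ℤ) = c i := by exact_mod_cast this
    have : 0 < (i :: l).count i := List.count_pos_iff.2 List.mem_cons_self
    omega
  let M := ⨆ (μ) (_ : μ ≠ β), wtSpace D.H g μ
  have hle (μ) (hμ : μ ≠ β) : wtSpace D.H g μ ≤ M :=
    le_iSup₂ (f := fun μ (_ : μ ≠ β) => wtSpace D.H g μ) μ hμ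
  have hM : D.H.toSubmodule ⊔ wordSpan D.e ⊔ wordSpan D.f ≤ M := by
    refine sup_le (sup_le ?_ (Submodule.span_le.2 ?_)) (Submodule.span_le.2 ?_)
    · rw [← D.zeroWtSpace]
      exact hle 0 hβ0.symm
    · rintro _ ⟨i, l, rfl⟩
      by_cases hw : ((i :: l).map D.α).sum = β
      · rw [SetLike.mem_coe, he i l hw]
        exact zero_mem M
      · exact hle _ hw (bracketWord_mem_wtSpace (e_mem_wtSpace D) i l)
    · rintro _ ⟨i, l, rfl⟩
      exact hle _ (hf i l) (bracketWord_mem_wtSpace (f_mem_wtSpace D) i l)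
  rw [sup_wordSpan_eq_top] at hM
  exact (iSupIndep_wtSpace D.cartan_abelian β).eq_bot_of_le (le_top.trans hM)

lemma wtSpace_sub_simpleRoot_eq_bot {β : Module.Dual ℂ D.H} {c : 𝓘 → ℕ}
    (hc : β = ∑ k, (c k : ℂ) • D.α k) {i j : 𝓘} (hij : i ≠ j) (hci : c i ≠ 0)
    (hroot : c j ≠ 0 → β - D.α j ∉ roots D) : wtSpace D.H g (β - D.α j) = ⊥ := by
  have hsub : β - D.α j = ∑ k, (((c k : ℤ) - if k = j then 1 else 0 : ℤ) : ℂ) • D.α k := by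
    simp [hc, sub_smul, Finset.sum_sub_distrib, ite_smul]
  by_cases hcj : c j = 0
  · rw [hsub]
    exact wtSpace_eq_bot_of_coeff_neg_of_coeff_pos D _ (a := j) (b := i) (by simp [hcj])
      (by simp only [hij, if_false]; omega)
  · by_contra hne
    refine hroot hcj ⟨fun h0 => hci ?_, hne⟩
    have := Fintype.linearIndependent_iffₛ.1 D.indepSimple _ 0 (by rw [← hsub, h0]; simp) i
    simpa [hij] using this

theorem exists_sub_simpleRoot_mem_roots (I : Set 𝓘) {β : Module.Dual ℂ D.H} (hβ : β ∈ roots D)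
    (c : 𝓘 → ℕ) (hc : β = ∑ k, (c k : ℂ) • D.α k)
    (hI : ∑ k ∈ Finset.univ.filter (· ∈ I), c k = 1)
    (hIc : 0 < ∑ k ∈ Finset.univ.filter (· ∉ I), c k) :
    ∃ j, j ∉ I ∧ c j ≠ 0 ∧ β - D.α j ∈ roots D := by
  obtain ⟨i, hi, hci⟩ := Finset.exists_ne_zero_of_sum_ne_zero (s := Finset.univ.filter (· ∈ I))
    (f := c) (by omega)
  obtain ⟨k, hk, hck⟩ := Finset.exists_ne_zero_of_sum_ne_zero
    (s := Finset.univ.filter (· ∉ I)) (f := c) (by omega)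
  simp only [Finset.mem_filter, Finset.mem_univ, true_and] at hi hk
  by_contra! hnot
  have hJ (j : 𝓘) (hj : j ∉ I) : wtSpace D.H g (β - D.α j) = ⊥ :=
    wtSpace_sub_simpleRoot_eq_bot D hc (fun h => hj (h ▸ hi)) hci (hnot j hj)
  refine hβ.2 (hc ▸ wtSpace_eq_bot_of_bracketWord_eq_zero D c (fun h => hci (by simp [h]))
    fun i' l hw => ?_)
  have hcount (k : 𝓘) : (i' :: l).count k = c k := by
    rw [sum_map_eq_sum_count_smul] at hw
    exact_mod_cast Fintype.linearIndependent_iffₛ.1 D.indepSimple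
      (fun k => ((i' :: l).count k : ℂ)) (fun k => (c k : ℂ))
      (by simpa [← Nat.cast_smul_eq_nsmul ℂ] using hw) k
  refine bracketWord_eq_zero_of_countP_eq_one (e_mem_wtSpace D) i' l (by rwa [hw, ← hc]) ?_ ?_
  · rw [countP_mem_eq_sum_count, ← hI]
    exact Finset.sum_congr rfl fun k _ => hcount k
  · exact ⟨k, List.count_pos_iff.1 (by rw [hcount]; omega), hk⟩

lemma exists_coeff_sub_simpleRoot (I : Set 𝓘) {β : Module.Dual ℂ D.H} {c : 𝓘 → ℕ}
    (hc : β = ∑ k, (c k : ℂ) • D.α k) (hI : ∑ k ∈ Finset.univ.filter (· ∈ I), c k = 1) {j : 𝓘}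
    (hj : j ∉ I) (hcj : c j ≠ 0) :
    ∃ c' : 𝓘 → ℕ, c' ≤ c ∧ ∑ k, c k = ∑ k, c' k + 1 ∧
      β - D.α j = ∑ k, (c' k : ℂ) • D.α k ∧ ∑ k ∈ Finset.univ.filter (· ∈ I), c' k = 1 := by
  obtain ⟨c', rfl⟩ : ∃ c' : 𝓘 → ℕ, c = c' + Pi.single j 1 := by
    refine ⟨c - Pi.single j 1, funext fun k => ?_⟩
    simp only [Pi.add_apply, Pi.sub_apply, Pi.single_apply]
    split_ifs with hk
    · subst hk
      omega
    · omega
  refine ⟨c', fun k => Nat.le_add_right _ _, ?_, ?_, ?_⟩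
  · simp [Finset.sum_add_distrib]
  · simp [hc, add_smul, Finset.sum_add_distrib, Pi.single_apply]
  · simpa [Finset.sum_add_distrib, hj] using hI

lemma eq_simpleRoot_of_sum_eq_one {β : Module.Dual ℂ D.H} {c : 𝓘 → ℕ}
    (hc : β = ∑ k, (c k : ℂ) • D.α k) (h1 : ∑ k, c k = 1) {i : 𝓘} (hci : c i ≠ 0) :
    β = D.α i := by
  have hck (k : 𝓘) (hk : k ≠ i) : c k = 0 := by
    have := Finset.sum_le_sum_of_subset (f := c) (Finset.subset_univ {k, i})
    rw [Finset.sum_pair hk] at this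
    omega
  have hci1 : c i = 1 := by
    have := Finset.single_le_sum (f := c) (fun _ _ => Nat.zero_le _) (Finset.mem_univ i)
    omega
  rw [hc, Finset.sum_eq_single i (fun k _ hk => by simp [hck k hk]) (by simp), hci1, Nat.cast_one,
    one_smul]

theorem exists_chain (I : Set 𝓘) (c : 𝓘 → ℕ) {β : Module.Dual ℂ D.H} (hβ : β ∈ roots D)
    (hc : β = ∑ k, (c k : ℂ) • D.α k) (hI : ∑ k ∈ Finset.univ.filter (· ∈ I), c k = 1) :
    ∃ βs : ℕ → Module.Dual ℂ D.H, βs 0 = β ∧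
      (∀ t : ℕ, t + 1 < ∑ k, c k → ∃ j : 𝓘, j ∉ I ∧ βs t - βs (t + 1) = D.α j) ∧
      (∀ t : ℕ, t < ∑ k, c k → InDeltaI1 D I (βs t)) ∧
      (∃ i : 𝓘, i ∈ I ∧ c i ≠ 0 ∧ βs (∑ k, c k - 1) = D.α i) := by
  have hsplit := Finset.sum_filter_add_sum_filter_not Finset.univ (· ∈ I) c
  by_cases hIc : ∑ k ∈ Finset.univ.filter (· ∉ I), c k = 0
  · obtain ⟨i, hi, hci⟩ := Finset.exists_ne_zero_of_sum_ne_zero (s := Finset.univ.filter (· ∈ I))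
      (f := c) (by omega)
    rw [Finset.mem_filter] at hi
    exact ⟨fun _ => β, rfl, fun t ht => by omega, fun _ _ => ⟨hβ, c, hc, hI⟩, i, hi.2, hci,
      eq_simpleRoot_of_sum_eq_one D hc (by omega) hci⟩
  · obtain ⟨j, hj, hcj, hβj⟩ := exists_sub_simpleRoot_mem_roots D I hβ c hc hI (by omega)
    obtain ⟨c', hc'c, hsum, hc', hI'⟩ := exists_coeff_sub_simpleRoot D I hc hI hj hcj
    obtain ⟨βs, h0, hstep, hmem, i, hi, hci, hlast⟩ := exists_chain I c' hβj hc' hI'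
    obtain ⟨n, hn⟩ : ∃ n, ∑ k, c' k = n + 1 := ⟨∑ k, c' k - 1, by
      have := Finset.sum_le_sum_of_subset (f := c') (Finset.filter_subset (· ∈ I) Finset.univ)
      omega⟩
    rw [hn] at hstep hmem hlast
    rw [hsum, hn]
    refine ⟨fun | 0 => β | t + 1 => βs t, rfl, fun t ht => ?_, fun t ht => ?_,
      i, hi, fun h => hci (Nat.eq_zero_of_le_zero (h ▸ hc'c i)), hlast⟩
    · cases t with
      | zero => exact ⟨j, hj, by simp [h0]⟩
      | succ t => exact hstep t (by omega)
    · cases t with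
      | zero => exact ⟨hβ, c, hc, hI⟩
      | succ t => exact hmem t (by omega)
termination_by ∑ k, c k
decreasing_by omega

end Roots

theorem unit_I_height_root_chain_general
    {𝓘 : Type} [Fintype 𝓘] {g : Type} [LieRing g] [LieAlgebra ℂ g]
    (D : Data 𝓘 g) (I : Set 𝓘)
    (β : Module.Dual ℂ D.H) (hβroot : β ∈ roots D)
    (c : 𝓘 → ℕ) (hc : β = ∑ k, (c k : ℂ) • D.α k)
    (hhtI : ∑ k ∈ Finset.univ.filter (fun k => k ∈ I), c k = 1)
    (hhtIc : 0 < ∑ k ∈ Finset.univ.filter (fun k => k ∉ I), c k) :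
    (∃ j : 𝓘, j ∉ I ∧ c j ≠ 0 ∧ InDeltaI1 D I (β - D.α j)) ∧
      (∃ βs : ℕ → Module.Dual ℂ D.H,
        βs 0 = β ∧
        (∀ t : ℕ, t + 1 < ∑ k, c k → ∃ j : 𝓘, j ∉ I ∧ βs t - βs (t + 1) = D.α j) ∧
        (∀ t : ℕ, t < ∑ k, c k → InDeltaI1 D I (βs t)) ∧
        (∃ i : 𝓘, i ∈ I ∧ c i ≠ 0 ∧ βs (∑ k, c k - 1) = D.α i)) := by
  obtain ⟨j, hj, hcj, hroot⟩ := exists_sub_simpleRoot_mem_roots D I hβroot c hc hhtI hhtIc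
  obtain ⟨c', -, -, hc', hI'⟩ := exists_coeff_sub_simpleRoot D I hc hhtI hj hcj
  exact ⟨⟨j, hj, hcj, hroot, c', hc', hI'⟩, exists_chain D I c hβroot hc hhtI⟩

/-- Lemma 2.12: if `β ∈ Δ` has `ht_I(β) = 1` and `ht_{I^c}(β) > 0`,
then `β − α_j ∈ Δ_{I,1}` for some `j ∈ I^c ∩ supp β`; consequently there is a chain
`β = β_1 ⊋ β_2 ⊋ ⋯ ⊋ β_m` in `Δ_{I,1}` with `m = ht β`, consecutive differences simple
roots from `Π_{I^c}`, terminating at the simple root `α_i` with `{i} = I ∩ supp β`. -/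
theorem unit_I_height_root_chain
    {𝓘 : Type} [Fintype 𝓘] [DecidableEq 𝓘] {g : Type} [LieRing g] [LieAlgebra ℂ g]
    (D : Data 𝓘 g) (I : Set 𝓘) (hI : I.Nonempty)
    (β : Module.Dual ℂ D.H) (hβroot : β ∈ roots D)
    (c : 𝓘 → ℕ) (hc : β = ∑ k, (c k : ℂ) • D.α k)
    (hhtI : ∑ k ∈ Finset.univ.filter (fun k => k ∈ I), c k = 1)
    (hhtIc : 0 < ∑ k ∈ Finset.univ.filter (fun k => k ∉ I), c k) :
    (∃ j : 𝓘, j ∉ I ∧ c j ≠ 0 ∧ InDeltaI1 D I (β - D.α j)) ∧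
      (∃ βs : ℕ → Module.Dual ℂ D.H,
        βs 0 = β ∧
        (∀ t : ℕ, t + 1 < ∑ k, c k → ∃ j : 𝓘, j ∉ I ∧ βs t - βs (t + 1) = D.α j) ∧
        (∀ t : ℕ, t < ∑ k, c k → InDeltaI1 D I (βs t)) ∧
        (∃ i : 𝓘, i ∈ I ∧ c i ≠ 0 ∧ βs (∑ k, c k - 1) = D.α i)) :=
  unit_I_height_root_chain_general D I β hβroot c hc hhtI hhtIc

end KM
end

section
/- Let λ ∈ P⁺ and let μ ∈ wt L(λ) with μ ≠ λ. Then there exist weights μ_0 = μ, μ_1, …, μ_n = λ of L(λ) with μ_{t−1} ≼ μ_t for all t, and (not necessarily distinct) nodes i_1, …, i_n ∈ supp(λ−μ) with n ≤ ht(λ−μ), such that for every 1 ≤ t ≤ n: ⟨μ_t, α_{i_t}^∨⟩ ∈ ℤ_{>0} and μ_{t−1} ∈ [s_{i_t}(μ_t), μ_t] ⊆ wt L(λ). -/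
/-!
For every node `i`, `(α_i^∨, e_i, f_i)` is an `sl₂`-triple, and `f_i` acts locally nilpotently on
`L(λ)`: `f_i^{λ(α_i^∨)+1} v` is killed by every `e_j`, hence zero by simplicity, and the vectors
killed by a power of `f_i` form a Lie submodule because `ad f_i` is locally nilpotent on the
Chevalley generators.

Given a weight `μ ≠ λ`, simplicity gives a weight vector `w` of weight `μ` and a node `i` with
`e_i w ≠ 0`. All weights lie below `λ`, so the `e_i`-string through `w` ends at some `e_i^p w`,
which is primitive. Hence `q = ⟨μ + pα_i, α_i^∨⟩` is a natural number with `f_i^j e_i^p w ≠ 0` for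
`j ≤ q`, and `q ≥ p` because a weight vector of eigenvalue `-P` on which `f_i` is nilpotent has
`e_i^P w ≠ 0`. This is one step `μ ⇝ μ + pα_i` of the chain; it lowers `ht(λ - μ)` by `p ≥ 1`, so
induction on the height finishes the proof.
-/

open scoped BigOperators

attribute [local instance] Classical.propDecidable

namespace KM

variable {g : Type} [LieRing g] [LieAlgebra ℂ g]

variable {𝓘 : Type}

open LieModule

section Sl2

variable {R L M : Type*} [CommRing R] [LieRing L] [LieAlgebra R L] [AddCommGroup M] [Module R M]
  [LieRingModule L M] [LieModule R L M] {h e f : L} {w : M} {μ : R}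

theorem _root_.IsSl2Triple.lie_f_pow_toEnd_e_succ (t : IsSl2Triple h e f)
    (hw : ⁅h, w⁆ = μ • w) (n : ℕ) :
    ⁅f, (toEnd R L M e ^ (n + 1)) w⁆ =
      (toEnd R L M e ^ (n + 1)) ⁅f, w⁆ - (((n : R) + 1) * (μ + n)) • (toEnd R L M e ^ n) w := by
  have hfe : ⁅f, e⁆ = -h := by rw [← lie_skew, t.lie_e_f]
  induction n with
  | zero =>
    simp only [zero_add, pow_one, pow_zero, toEnd_apply_apply, Module.End.one_apply,
      leibniz_lie f e, hfe, neg_lie, hw]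
    module
  | succ n ih =>
    rw [← IsSl2Triple.lie_e_pow_toEnd_e (n + 1), leibniz_lie f e, hfe, neg_lie,
      t.lie_h_pow_toEnd_e hw, ih, lie_sub, lie_smul, IsSl2Triple.lie_e_pow_toEnd_e,
      IsSl2Triple.lie_e_pow_toEnd_e]
    push_cast
    module

variable [IsDomain R] [CharZero R] [Module.IsTorsionFree R M]

theorem _root_.IsSl2Triple.HasPrimitiveVectorWith.exists_nat_of_pow_toEnd_f_eq_zero
    {t : IsSl2Triple h e f} (P : t.HasPrimitiveVectorWith w μ) {N : ℕ}
    (hN : (toEnd R L M f ^ N) w = 0) : ∃ n : ℕ, μ = n := by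
  obtain ⟨n, hn, hn1⟩ := Nat.exists_not_and_succ_of_not_zero_of_exists (p := fun n ↦
    (toEnd R L M f ^ n) w = 0) (by simpa using P.ne_zero) ⟨N, hN⟩
  have := P.lie_e_pow_succ_toEnd_f n
  rw [hn1, lie_zero, eq_comm, smul_eq_zero_iff_left hn, mul_eq_zero, sub_eq_zero] at this
  exact ⟨n, this.resolve_left (Nat.cast_add_one_ne_zero n)⟩

/-- Induction on the nilpotency order of `f` on `w`; when `⁅f, w⁆ = 0`, `w` is primitive for the
reversed triple `(-h, f, e)`. -/
theorem _root_.IsSl2Triple.pow_toEnd_e_ne_zero_of_eq_neg_nat (t : IsSl2Triple h e f) {N : ℕ}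
    (hN : (toEnd R L M f ^ N) w = 0) {P : ℕ} (hw : ⁅h, w⁆ = -(P : R) • w) (hw0 : w ≠ 0) :
    (toEnd R L M e ^ P) w ≠ 0 := by
  induction N generalizing w P with
  | zero => simp_all
  | succ N ih =>
    by_cases hf : ⁅f, w⁆ = 0
    · have hP : t.symm.HasPrimitiveVectorWith w (P : R) := ⟨hw0, by simp [hw], hf⟩
      exact hP.pow_toEnd_f_ne_zero_of_eq_nat rfl le_rfl
    · have hfw : ⁅h, ⁅f, w⁆⁆ = -((P + 2 : ℕ) : R) • ⁅f, w⁆ := by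
        rw [leibniz_lie, t.lie_lie_smul_f R, hw, neg_lie, smul_lie, lie_smul]
        push_cast
        module
      have ih' := ih (by rwa [pow_succ, Module.End.mul_apply] at hN) hfw hf
      intro hP
      have hP1 : (toEnd R L M e ^ (P + 1)) w = 0 := Module.End.pow_map_zero_of_le (by omega) hP
      have hP2 : (toEnd R L M e ^ (P + 2)) w = 0 := Module.End.pow_map_zero_of_le (by omega) hP
      have := t.lie_f_pow_toEnd_e_succ hw (P + 1)
      rw [hP2, hP1, lie_zero, smul_zero, sub_zero] at this
      exact ih' this.symm

theorem _root_.IsSl2Triple.exists_nat_eq_add_two_mul_of_pow_toEnd_e_succ_eq_zero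
    (t : IsSl2Triple h e f) (hf : ∀ x : M, ∃ N, (toEnd R L M f ^ N) x = 0)
    (hw : ⁅h, w⁆ = μ • w) {p : ℕ} (hp : (toEnd R L M e ^ p) w ≠ 0)
    (hp1 : (toEnd R L M e ^ (p + 1)) w = 0) :
    ∃ q : ℕ, p ≤ q ∧ μ + 2 * p = q ∧
      ∀ j ≤ q, (toEnd R L M f ^ j) ((toEnd R L M e ^ p) w) ≠ 0 := by
  have P : t.HasPrimitiveVectorWith ((toEnd R L M e ^ p) w) (μ + 2 * p) :=
    ⟨hp, t.lie_h_pow_toEnd_e hw p, by rwa [IsSl2Triple.lie_e_pow_toEnd_e]⟩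
  obtain ⟨q, hq⟩ := P.exists_nat_of_pow_toEnd_f_eq_zero (hf _).choose_spec
  refine ⟨q, ?_, hq, fun j hj ↦ P.pow_toEnd_f_ne_zero_of_eq_nat hq hj⟩
  by_contra! hqp
  have hμ : ⁅h, w⁆ = -((2 * p - q : ℕ) : R) • w := by
    rw [hw, Nat.cast_sub (by omega), eq_sub_of_add_eq hq]
    push_cast
    ring_nf
  refine t.pow_toEnd_e_ne_zero_of_eq_neg_nat (hf w).choose_spec hμ ?_ ?_
  · rintro rfl
    simp at hp
  · exact Module.End.pow_map_zero_of_le (by omega) hp1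

end Sl2

section KacMoody

variable {𝓘 g : Type} [LieRing g] [LieAlgebra ℂ g] (D : Data 𝓘 g)
  {V : Type} [AddCommGroup V] [Module ℂ V] [LieRingModule g V] [LieModule ℂ g V]

namespace Data

theorem α_coroot_self (i : 𝓘) : D.α i (D.coroot i) = 2 := by
  simp [D.pairing_eq, D.A_diag]

theorem isSl2Triple (i : 𝓘) : IsSl2Triple (D.coroot i : g) (D.e i) (D.f i) where
  h_ne_zero h0 := by
    have := D.α_coroot_self i
    rw [show D.coroot i = 0 from Subtype.ext h0, map_zero] at this
    norm_num at this
  lie_e_f := D.lie_e_f_same i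
  lie_h_e_nsmul := by rw [D.lie_h_e, α_coroot_self, ofNat_smul_eq_nsmul]
  lie_h_f_nsmul := by rw [D.lie_h_f, α_coroot_self, neg_smul, ofNat_smul_eq_nsmul]

theorem engel_f_eq_top (i : 𝓘) : LieSubalgebra.engel ℂ (D.f i) = ⊤ := by
  rw [eq_top_iff, ← D.generates, LieSubalgebra.lieSpan_le]
  have t := D.isSl2Triple i
  rintro x ((hx | ⟨j, rfl⟩) | ⟨j, rfl⟩) <;> rw [SetLike.mem_coe, LieSubalgebra.mem_engel_iff]
  · refine ⟨2, ?_⟩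
    simp [pow_succ, ← lie_skew (D.f i) x, D.lie_h_f ⟨x, hx⟩ i]
  · by_cases hji : j = i
    · subst hji
      refine ⟨3, ?_⟩
      simp [pow_succ, ← lie_skew (D.f j), t.lie_e_f, t.lie_lie_smul_f ℂ]
    · exact ⟨1, by simp [← lie_skew (D.f i), D.lie_e_f_ne j i hji]⟩
  · by_cases hji : j = i
    · exact ⟨1, by simp [hji]⟩
    · exact ⟨_, D.serre_f i j (Ne.symm hji)⟩

end Data

variable {D}

theorem mem_wtSet_of_mem_wtSpace {ν : Module.Dual ℂ D.H} {w : V} (hw : w ∈ wtSpace D.H V ν)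
    (hw0 : w ≠ 0) : ν ∈ wtSet D.H V :=
  (Submodule.ne_bot_iff _).2 ⟨w, hw, hw0⟩

theorem lie_e_mem_wtSpace {ν : Module.Dual ℂ D.H} {w : V} (hw : w ∈ wtSpace D.H V ν) (i : 𝓘) :
    ⁅D.e i, w⁆ ∈ wtSpace D.H V (ν + D.α i) := fun h ↦ by
  rw [leibniz_lie, D.lie_h_e, smul_lie, hw h, lie_smul, LinearMap.add_apply, add_smul, add_comm]

theorem lie_f_mem_wtSpace {ν : Module.Dual ℂ D.H} {w : V} (hw : w ∈ wtSpace D.H V ν) (i : 𝓘) :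
    ⁅D.f i, w⁆ ∈ wtSpace D.H V (ν - D.α i) := fun h ↦ by
  rw [leibniz_lie, D.lie_h_f, smul_lie, hw h, lie_smul, LinearMap.sub_apply, sub_smul, neg_smul,
    neg_add_eq_sub]

theorem pow_toEnd_e_mem_wtSpace {ν : Module.Dual ℂ D.H} {w : V} (hw : w ∈ wtSpace D.H V ν)
    (i : 𝓘) (n : ℕ) :
    (toEnd ℂ g V (D.e i) ^ n) w ∈ wtSpace D.H V (ν + (n : ℂ) • D.α i) := by
  induction n with
  | zero => simpa using hw
  | succ n ih =>
    rw [← IsSl2Triple.lie_e_pow_toEnd_e, Nat.cast_succ, add_smul, one_smul, ← add_assoc]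
    exact lie_e_mem_wtSpace ih i

theorem pow_toEnd_f_mem_wtSpace {ν : Module.Dual ℂ D.H} {w : V} (hw : w ∈ wtSpace D.H V ν)
    (i : 𝓘) (n : ℕ) :
    (toEnd ℂ g V (D.f i) ^ n) w ∈ wtSpace D.H V (ν - (n : ℂ) • D.α i) := by
  induction n with
  | zero => simpa using hw
  | succ n ih =>
    rw [← IsSl2Triple.lie_e_pow_toEnd_e, Nat.cast_succ, add_smul, one_smul, ← sub_sub]
    exact lie_f_mem_wtSpace ih i

theorem wtSpace_iSupIndep : iSupIndep (wtSpace D.H V) := by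
  have hcomm (h h' : D.H) : Commute (toEnd ℂ g V h) (toEnd ℂ g V h') :=
    LinearMap.ext fun m ↦ by simp [leibniz_lie (h : g) (h' : g) m, D.cartan_abelian]
  refine ((Module.End.independent_iInf_maxGenEigenspace_of_forall_mapsTo
    (fun h : D.H ↦ toEnd ℂ g V h) fun h h' φ ↦
      Module.End.mapsTo_maxGenEigenspace_of_comm (hcomm h' h) φ).comp
    DFunLike.coe_injective).mono fun μ w hw ↦ ?_
  simp only [Function.comp_apply, Submodule.mem_iInf, Module.End.mem_maxGenEigenspace]
  exact fun h ↦ ⟨1, by simp [hw h]⟩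

variable (D) in
def rootSum [Fintype 𝓘] (d : 𝓘 → ℕ) : Module.Dual ℂ D.H := ∑ i, (d i : ℂ) • D.α i

section RootSum

variable [Fintype 𝓘]

theorem rootSum_add (d d' : 𝓘 → ℕ) : rootSum D (d + d') = rootSum D d + rootSum D d' := by
  simp only [rootSum, Pi.add_apply, Nat.cast_add, add_smul, Finset.sum_add_distrib]

theorem rootSum_single (i : 𝓘) (n : ℕ) : rootSum D (Pi.single i n) = (n : ℂ) • D.α i := by
  rw [rootSum, Fintype.sum_eq_single i fun j hj ↦ by simp [hj], Pi.single_eq_same]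

variable (D) in
theorem rootSum_injective : Function.Injective (rootSum D) := fun d d' h ↦ funext fun i ↦ by
  have := linearIndependent_iff_injective_fintypeLinearCombination.1 D.indepSimple
    (a₁ := fun i ↦ (d i : ℂ)) (a₂ := fun i ↦ (d' i : ℂ))
    (by simpa [rootSum, Fintype.linearCombination_apply] using h)
  exact_mod_cast congrFun this i

end RootSum

theorem lie_mem_of_forall_generators (N : Submodule ℂ V)
    (hH : ∀ h : D.H, ∀ m ∈ N, ⁅(h : g), m⁆ ∈ N) (he : ∀ j, ∀ m ∈ N, ⁅D.e j, m⁆ ∈ N)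
    (hf : ∀ j, ∀ m ∈ N, ⁅D.f j, m⁆ ∈ N) (x : g) {m : V} (hm : m ∈ N) : ⁅x, m⁆ ∈ N := by
  let S : LieSubalgebra ℂ g :=
    { carrier := {x | ∀ m ∈ N, ⁅x, m⁆ ∈ N}
      add_mem' := fun hx hy m hm ↦ by rw [add_lie]; exact N.add_mem (hx m hm) (hy m hm)
      zero_mem' := fun m _ ↦ by rw [zero_lie]; exact N.zero_mem
      smul_mem' := fun c x hx m hm ↦ by rw [smul_lie]; exact N.smul_mem c (hx m hm)
      lie_mem' := fun hx hy m hm ↦ by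
        rw [lie_lie]; exact N.sub_mem (hx _ (hy m hm)) (hy _ (hx m hm)) }
  have hS : LieSubalgebra.lieSpan ℂ g ((D.H : Set g) ∪ Set.range D.e ∪ Set.range D.f) ≤ S := by
    rw [LieSubalgebra.lieSpan_le]
    rintro x ((hx | ⟨j, rfl⟩) | ⟨j, rfl⟩)
    exacts [hH ⟨x, hx⟩, he j, hf j]
  rw [D.generates] at hS
  exact hS (LieSubalgebra.mem_top x) m hm

variable (D) in
def fMonomial (l : List 𝓘) (u : V) : V := l.foldr (fun i w ↦ ⁅D.f i, w⁆) u

variable (D) in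
/-- `U(𝔫⁻) · u`. -/
def fSpan (u : V) : Submodule ℂ V := Submodule.span ℂ (Set.range fun l ↦ fMonomial D l u)

theorem exists_fMonomial_mem_wtSpace [Fintype 𝓘] {κ : Module.Dual ℂ D.H} {u : V}
    (hu : u ∈ wtSpace D.H V κ) (l : List 𝓘) :
    ∃ d, fMonomial D l u ∈ wtSpace D.H V (κ - rootSum D d) := by
  induction l with
  | nil => exact ⟨0, by simpa [rootSum, fMonomial] using hu⟩
  | cons i l ih =>
    obtain ⟨d, hd⟩ := ih
    refine ⟨d + Pi.single i 1, ?_⟩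
    rw [rootSum_add, rootSum_single, Nat.cast_one, one_smul, ← sub_sub]
    exact lie_f_mem_wtSpace hd i

theorem lie_f_mem_fSpan (u : V) (i : 𝓘) {m : V} (hm : m ∈ fSpan D u) :
    ⁅D.f i, m⁆ ∈ fSpan D u := by
  have : fSpan D u ≤ (fSpan D u).comap (toEnd ℂ g V (D.f i)) :=
    Submodule.span_le.2 <| Set.range_subset_iff.2 fun l ↦ Submodule.subset_span ⟨i :: l, rfl⟩
  exact this hm

theorem lie_h_mem_fSpan [Fintype 𝓘] {κ : Module.Dual ℂ D.H} {u : V} (hu : u ∈ wtSpace D.H V κ)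
    (h : D.H) {m : V} (hm : m ∈ fSpan D u) : ⁅(h : g), m⁆ ∈ fSpan D u := by
  have : fSpan D u ≤ (fSpan D u).comap (toEnd ℂ g V h) := by
    refine Submodule.span_le.2 <| Set.range_subset_iff.2 fun l ↦ ?_
    obtain ⟨d, hd⟩ := exists_fMonomial_mem_wtSpace hu l
    simpa [hd h] using (fSpan D u).smul_mem _ (Submodule.subset_span ⟨l, rfl⟩)
  exact this hm

theorem lie_e_mem_fSpan [Fintype 𝓘] {κ : Module.Dual ℂ D.H} {u : V} (hu : u ∈ wtSpace D.H V κ)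
    (he : ∀ j, ⁅D.e j, u⁆ = 0) (j : 𝓘) {m : V} (hm : m ∈ fSpan D u) :
    ⁅D.e j, m⁆ ∈ fSpan D u := by
  have : fSpan D u ≤ (fSpan D u).comap (toEnd ℂ g V (D.e j)) := by
    refine Submodule.span_le.2 <| Set.range_subset_iff.2 fun l ↦ ?_
    induction l with
    | nil => simp [fMonomial, he j]
    | cons i l ih =>
      rw [SetLike.mem_coe, Submodule.mem_comap, toEnd_apply_apply] at ih ⊢
      rw [show fMonomial D (i :: l) u = ⁅D.f i, fMonomial D l u⁆ from rfl, leibniz_lie]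
      refine add_mem ?_ (lie_f_mem_fSpan u i ih)
      by_cases hij : j = i
      · subst hij
        rw [D.lie_e_f_same]
        exact lie_h_mem_fSpan hu _ (Submodule.subset_span ⟨l, rfl⟩)
      · simp [D.lie_e_f_ne j i hij]
  exact this hm

variable (D) in
def fSpanLieSubmodule [Fintype 𝓘] {κ : Module.Dual ℂ D.H} {u : V} (hu : u ∈ wtSpace D.H V κ)
    (he : ∀ j, ⁅D.e j, u⁆ = 0) : LieSubmodule ℂ g V :=
  { fSpan D u with
    lie_mem := fun {x _} ↦ lie_mem_of_forall_generators (fSpan D u)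
      (fun h _ ↦ lie_h_mem_fSpan hu h) (fun j _ ↦ lie_e_mem_fSpan hu he j)
      (fun j _ ↦ lie_f_mem_fSpan u j) x }

section HighestWeight

variable [Fintype 𝓘] {lam : Module.Dual ℂ D.H} {v : V}

theorem exists_eq_sub_rootSum_of_fSpan_eq_top {κ : Module.Dual ℂ D.H} {u : V}
    (hu : u ∈ wtSpace D.H V κ) (htop : fSpan D u = ⊤) {ν : Module.Dual ℂ D.H}
    (hν : ν ∈ wtSet D.H V) : ∃ d, ν = κ - rootSum D d := by
  by_contra! hne
  refine hν ((wtSpace_iSupIndep ν).eq_bot_of_le ?_)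
  calc wtSpace D.H V ν ≤ fSpan D u := htop ▸ le_top
    _ ≤ ⨆ d, wtSpace D.H V (κ - rootSum D d) :=
      Submodule.span_le.2 <| Set.range_subset_iff.2 fun l ↦
        have ⟨d, hd⟩ := exists_fMonomial_mem_wtSpace hu l
        le_iSup (fun d ↦ wtSpace D.H V (κ - rootSum D d)) d hd
    _ ≤ ⨆ (μ) (_ : μ ≠ ν), wtSpace D.H V μ :=
      iSup_le fun d ↦ le_iSup₂_of_le (κ - rootSum D d) (hne d).symm le_rfl

theorem fSpan_eq_top_of_isHW (hV : IsHW D V lam v) : fSpan D v = ⊤ := by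
  obtain ⟨-, hv, he, hspan⟩ := hV
  have : LieSubmodule.lieSpan ℂ g {v} ≤ fSpanLieSubmodule D hv he :=
    LieSubmodule.lieSpan_le.2 <| Set.singleton_subset_iff.2 <| Submodule.subset_span ⟨[], rfl⟩
  rw [hspan, top_le_iff] at this
  exact (LieSubmodule.toSubmodule_eq_top _).2 this

theorem fSpan_eq_top_of_isSimple (hsimple : ∀ N : LieSubmodule ℂ g V, N = ⊥ ∨ N = ⊤)
    {κ : Module.Dual ℂ D.H} {u : V} (hu : u ∈ wtSpace D.H V κ) (hu0 : u ≠ 0)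
    (he : ∀ j, ⁅D.e j, u⁆ = 0) : fSpan D u = ⊤ := by
  refine (LieSubmodule.toSubmodule_eq_top _).2 ((hsimple (fSpanLieSubmodule D hu he)).resolve_left
    fun hbot ↦ hu0 ?_)
  have : u ∈ fSpanLieSubmodule D hu he := Submodule.subset_span ⟨[], rfl⟩
  simpa [hbot] using this

theorem exists_eq_sub_rootSum (hV : IsHW D V lam v) {ν : Module.Dual ℂ D.H}
    (hν : ν ∈ wtSet D.H V) : ∃ d, ν = lam - rootSum D d :=
  exists_eq_sub_rootSum_of_fSpan_eq_top hV.2.1 (fSpan_eq_top_of_isHW hV) hν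

theorem eq_of_forall_lie_e_eq_zero (hsimple : ∀ N : LieSubmodule ℂ g V, N = ⊥ ∨ N = ⊤)
    (hV : IsHW D V lam v) {κ : Module.Dual ℂ D.H} {u : V} (hu : u ∈ wtSpace D.H V κ)
    (hu0 : u ≠ 0) (he : ∀ j, ⁅D.e j, u⁆ = 0) : κ = lam := by
  obtain ⟨d, hd⟩ := exists_eq_sub_rootSum hV (mem_wtSet_of_mem_wtSpace hu hu0)
  obtain ⟨d', hd'⟩ := exists_eq_sub_rootSum_of_fSpan_eq_top hu
    (fSpan_eq_top_of_isSimple hsimple hu hu0 he) (mem_wtSet_of_mem_wtSpace hV.2.1 hV.1)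
  rw [hd, sub_sub, eq_comm, sub_eq_self, ← rootSum_add] at hd'
  have hdd' : d + d' = 0 := rootSum_injective D (hd'.trans (by simp [rootSum]))
  have hd0 : d = 0 := funext fun i ↦ (add_eq_zero.1 (congrFun hdd' i)).1
  simp [hd, hd0, rootSum]

end HighestWeight

section Integrable

variable [Fintype 𝓘] {lam : Module.Dual ℂ D.H} {v : V}

theorem pow_toEnd_f_eq_zero_of_isHW (hsimple : ∀ N : LieSubmodule ℂ g V, N = ⊥ ∨ N = ⊤)
    (hV : IsHW D V lam v) (i : 𝓘) {k : ℕ} (hk : lam (D.coroot i) = k) :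
    (toEnd ℂ g V (D.f i) ^ (k + 1)) v = 0 := by
  by_contra hne
  have he (j : 𝓘) : ⁅D.e j, (toEnd ℂ g V (D.f i) ^ (k + 1)) v⁆ = 0 := by
    by_cases hji : j = i
    · subst hji
      have P : (D.isSl2Triple j).HasPrimitiveVectorWith v (lam (D.coroot j)) :=
        ⟨hV.1, hV.2.1 _, hV.2.2.1 j⟩
      rw [P.lie_e_pow_succ_toEnd_f, hk, sub_self, mul_zero, zero_smul]
    · have hc : Commute (toEnd ℂ g V (D.e j)) (toEnd ℂ g V (D.f i)) :=
        LinearMap.ext fun m ↦ by simp [leibniz_lie (D.e j) (D.f i) m, D.lie_e_f_ne j i hji]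
      rw [← toEnd_apply_apply ℂ, ← Module.End.mul_apply, (hc.pow_right _).eq,
        Module.End.mul_apply, toEnd_apply_apply, hV.2.2.1 j, map_zero]
  have := congrArg (· (D.coroot i)) <|
    eq_of_forall_lie_e_eq_zero hsimple hV (pow_toEnd_f_mem_wtSpace hV.2.1 i (k + 1)) hne he
  simp [D.α_coroot_self] at this
  norm_cast at this

theorem exists_pow_toEnd_f_eq_zero (hsimple : ∀ N : LieSubmodule ℂ g V, N = ⊥ ∨ N = ⊤)
    (hV : IsHW D V lam v) (hP : ∀ i : 𝓘, ∃ k : ℕ, lam (D.coroot i) = (k : ℂ)) (i : 𝓘)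
    (w : V) : ∃ N, (toEnd ℂ g V (D.f i) ^ N) w = 0 := by
  let N : LieSubmodule ℂ g V :=
    { (toEnd ℂ g V (D.f i)).maxGenEigenspace 0 with
      lie_mem := fun {x _} hm ↦ by
        have hx : x ∈ LieSubalgebra.engel ℂ (D.f i) := D.engel_f_eq_top i ▸ trivial
        rw [LieSubalgebra.mem_engel_iff] at hx
        replace hx : x ∈ (toEnd ℂ g g (D.f i)).maxGenEigenspace 0 := by
          simp only [Module.End.mem_maxGenEigenspace, zero_smul, sub_zero]
          exact hx
        simpa using lie_mem_maxGenEigenspace_toEnd hx hm }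
  have hv : v ∈ N := by
    obtain ⟨k, hk⟩ := hP i
    exact Module.End.mem_maxGenEigenspace _ _ _ |>.2
      ⟨k + 1, by simpa using pow_toEnd_f_eq_zero_of_isHW hsimple hV i hk⟩
  have hN : N = ⊤ := by
    rw [eq_top_iff, ← hV.2.2.2, LieSubmodule.lieSpan_le]
    simpa using hv
  have hw : w ∈ N := hN ▸ LieSubmodule.mem_top w
  simpa [N, Module.End.mem_maxGenEigenspace] using hw

end Integrable

variable (D V) in
/-- The step `μ_{t-1} = μ' ⇝ μ_t = μ` through the node `i_t = i`, with `k = ⟨μ, α_i^∨⟩`. -/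
def IsStringStep (c : 𝓘 → ℕ) (μ' μ : Module.Dual ℂ D.H) (i : 𝓘) (k : ℕ) : Prop :=
  c i ≠ 0 ∧ 0 < k ∧ μ (D.coroot i) = (k : ℂ) ∧
    (∃ j : ℕ, j ≤ k ∧ μ' = μ - (j : ℂ) • D.α i) ∧
    (∀ j : ℕ, j ≤ k → μ - (j : ℂ) • D.α i ∈ wtSet D.H V)

variable (D V) in
def IsStringChain (c : 𝓘 → ℕ) (n : ℕ) (μs : ℕ → Module.Dual ℂ D.H) (is : ℕ → 𝓘)
    (ks : ℕ → ℕ) : Prop :=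
  ∀ t, 1 ≤ t → t ≤ n → IsStringStep D V c (μs (t - 1)) (μs t) (is t) (ks t)

theorem IsStringStep.mono {c c' : 𝓘 → ℕ} (hc : ∀ j, c j ≠ 0 → c' j ≠ 0)
    {μ' μ : Module.Dual ℂ D.H} {i : 𝓘} {k : ℕ} (h : IsStringStep D V c μ' μ i k) :
    IsStringStep D V c' μ' μ i k :=
  ⟨hc i h.1, h.2⟩

theorem IsStringStep.mem_wtSet {c : 𝓘 → ℕ} {μ' μ : Module.Dual ℂ D.H} {i : 𝓘} {k : ℕ}
    (h : IsStringStep D V c μ' μ i k) : μ ∈ wtSet D.H V := by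
  simpa using h.2.2.2.2 0 (Nat.zero_le _)

theorem IsStringChain.cons {c c' : 𝓘 → ℕ} (hc : ∀ j, c' j ≠ 0 → c j ≠ 0)
    {ν : Module.Dual ℂ D.H} {μs : ℕ → Module.Dual ℂ D.H} {i : 𝓘} {k : ℕ} {is : ℕ → 𝓘}
    {ks : ℕ → ℕ} {n : ℕ} (hstep : IsStringStep D V c ν (μs 0) i k)
    (hchain : IsStringChain D V c' n μs is ks) :
    IsStringChain D V c (n + 1) (fun t ↦ if t = 0 then ν else μs (t - 1))
      (fun t ↦ if t ≤ 1 then i else is (t - 1)) (fun t ↦ if t ≤ 1 then k else ks (t - 1)) := by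
  rintro (_ | _ | t) h1 hn
  · omega
  · simpa using hstep
  · simpa using (hchain (t + 1) (by omega) (by omega)).mono hc

section Chain

variable [Fintype 𝓘] {lam : Module.Dual ℂ D.H} {v : V}

theorem exists_eq_add_single (hV : IsHW D V lam v) {ν : Module.Dual ℂ D.H} {d : 𝓘 → ℕ}
    (hd : ν = lam - rootSum D d) {i : 𝓘} {n : ℕ} (hn : ν + (n : ℂ) • D.α i ∈ wtSet D.H V) :
    ∃ d', ν + (n : ℂ) • D.α i = lam - rootSum D d' ∧ d = d' + Pi.single i n := by
  obtain ⟨d', hd'⟩ := exists_eq_sub_rootSum hV hn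
  refine ⟨d', hd', rootSum_injective D ?_⟩
  rw [rootSum_add, rootSum_single]
  rw [hd] at hd'
  linear_combination (norm := module) -hd'

theorem le_of_pow_toEnd_e_ne_zero (hV : IsHW D V lam v) {ν : Module.Dual ℂ D.H} {d : 𝓘 → ℕ}
    (hd : ν = lam - rootSum D d) {w : V} (hw : w ∈ wtSpace D.H V ν) {i : 𝓘} {n : ℕ}
    (hn : (toEnd ℂ g V (D.e i) ^ n) w ≠ 0) : n ≤ d i := by
  obtain ⟨d', -, rfl⟩ := exists_eq_add_single hV hd
    (mem_wtSet_of_mem_wtSpace (pow_toEnd_e_mem_wtSpace hw i n) hn)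
  simp

theorem exists_pow_toEnd_e_ne_zero_and_succ_eq_zero (hV : IsHW D V lam v)
    {ν : Module.Dual ℂ D.H} {d : 𝓘 → ℕ} (hd : ν = lam - rootSum D d) {w : V}
    (hw : w ∈ wtSpace D.H V ν) (hw0 : w ≠ 0) (i : 𝓘) :
    ∃ p, (toEnd ℂ g V (D.e i) ^ p) w ≠ 0 ∧ (toEnd ℂ g V (D.e i) ^ (p + 1)) w = 0 :=
  Nat.exists_not_and_succ_of_not_zero_of_exists (p := fun n ↦ (toEnd ℂ g V (D.e i) ^ n) w = 0)
    (by simpa using hw0) ⟨d i + 1, by_contra fun h ↦ by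
      have := le_of_pow_toEnd_e_ne_zero hV hd hw h
      omega⟩

theorem exists_lie_e_ne_zero (hsimple : ∀ N : LieSubmodule ℂ g V, N = ⊥ ∨ N = ⊤)
    (hV : IsHW D V lam v) {ν : Module.Dual ℂ D.H} (hν : ν ∈ wtSet D.H V) (hne : ν ≠ lam) :
    ∃ i w, w ∈ wtSpace D.H V ν ∧ w ≠ 0 ∧ ⁅D.e i, w⁆ ≠ 0 := by
  obtain ⟨w, hw, hw0⟩ := (Submodule.ne_bot_iff _).1 hν
  by_contra! h
  exact hne (eq_of_forall_lie_e_eq_zero hsimple hV hw hw0 fun j ↦ h j w hw hw0)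

theorem exists_isStringStep (hsimple : ∀ N : LieSubmodule ℂ g V, N = ⊥ ∨ N = ⊤)
    (hV : IsHW D V lam v) (hP : ∀ i : 𝓘, ∃ k : ℕ, lam (D.coroot i) = (k : ℂ))
    {ν : Module.Dual ℂ D.H} (hν : ν ∈ wtSet D.H V) (hne : ν ≠ lam) {d : 𝓘 → ℕ}
    (hd : ν = lam - rootSum D d) :
    ∃ (ν' : Module.Dual ℂ D.H) (i : 𝓘) (p q : ℕ) (d' : 𝓘 → ℕ), 0 < p ∧
      d = d' + Pi.single i p ∧ ν' = lam - rootSum D d' ∧ IsStringStep D V d ν ν' i q := by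
  obtain ⟨i, w, hw, hw0, hew⟩ := exists_lie_e_ne_zero hsimple hV hν hne
  obtain ⟨p, hp, hp1⟩ := exists_pow_toEnd_e_ne_zero_and_succ_eq_zero hV hd hw hw0 i
  obtain ⟨q, hpq, hq, hfq⟩ :=
    (D.isSl2Triple i).exists_nat_eq_add_two_mul_of_pow_toEnd_e_succ_eq_zero
      (exists_pow_toEnd_f_eq_zero hsimple hV hP i) (hw _) hp hp1
  have hp0 : 0 < p := Nat.pos_of_ne_zero fun h ↦ hew (by simpa [h] using hp1)
  have hwt (j : ℕ) (hj : j ≤ q) : ν + (p : ℂ) • D.α i - (j : ℂ) • D.α i ∈ wtSet D.H V :=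
    mem_wtSet_of_mem_wtSpace (pow_toEnd_f_mem_wtSpace (pow_toEnd_e_mem_wtSpace hw i p) i j)
      (hfq j hj)
  obtain ⟨d', hd', hdd'⟩ := exists_eq_add_single hV hd (by simpa using hwt 0 (Nat.zero_le _))
  refine ⟨_, i, p, q, d', hp0, hdd', hd', ?_, by omega, ?_, ⟨p, hpq, by simp⟩, hwt⟩
  · simp only [hdd', Pi.add_apply, Pi.single_eq_same]
    omega
  · simp only [LinearMap.add_apply, LinearMap.smul_apply, D.α_coroot_self, smul_eq_mul, ← hq]
    ring

theorem exists_isStringChain [Nonempty 𝓘] (hsimple : ∀ N : LieSubmodule ℂ g V, N = ⊥ ∨ N = ⊤)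
    (hV : IsHW D V lam v) (hP : ∀ i : 𝓘, ∃ k : ℕ, lam (D.coroot i) = (k : ℂ)) (d : 𝓘 → ℕ)
    {ν : Module.Dual ℂ D.H} (hν : ν ∈ wtSet D.H V) (hd : ν = lam - rootSum D d) :
    ∃ (n : ℕ) (μs : ℕ → Module.Dual ℂ D.H) (is : ℕ → 𝓘) (ks : ℕ → ℕ),
      n ≤ ∑ i, d i ∧ μs 0 = ν ∧ μs n = lam ∧ IsStringChain D V d n μs is ks := by
  induction hs : ∑ i, d i using Nat.strong_induction_on generalizing d ν with
  | _ s ih =>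
  by_cases hne : ν = lam
  · exact ⟨0, fun _ ↦ ν, fun _ ↦ Classical.arbitrary 𝓘, fun _ ↦ 0, by omega, rfl, hne,
      fun t h1 h2 ↦ by omega⟩
  obtain ⟨ν', i, p, q, d', hp, hdd', hd', hstep⟩ := exists_isStringStep hsimple hV hP hν hne hd
  have hsum : ∑ j, d j = ∑ j, d' j + p := by simp [hdd', Finset.sum_add_distrib]
  obtain ⟨n, μs, is, ks, hn, h0, hlam, hchain⟩ :=
    ih _ (by omega) d' hstep.mem_wtSet hd' rfl
  refine ⟨n + 1, _, _, _, by omega, if_pos rfl, by simpa using hlam,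
    hchain.cons (fun j hj ↦ ?_) (h0 ▸ hstep)⟩
  simp only [hdd', Pi.add_apply]
  omega

end Chain

end KacMoody

theorem integrable_chain_to_highest_weight_general
    {𝓘 : Type} [Fintype 𝓘] {g : Type} [LieRing g] [LieAlgebra ℂ g]
    (D : Data 𝓘 g)
    (V : Type) [AddCommGroup V] [Module ℂ V] [LieRingModule g V] [LieModule ℂ g V]
    (lam : Module.Dual ℂ D.H) (v : V) (hV : IsHW D V lam v)
    (hsimple : ∀ N : LieSubmodule ℂ g V, N = ⊥ ∨ N = ⊤)
    (hP : ∀ i : 𝓘, ∃ k : ℕ, lam (D.coroot i) = (k : ℂ))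
    (μ : Module.Dual ℂ D.H) (hμ : μ ∈ wtSet D.H V) (hne : μ ≠ lam)
    (c : 𝓘 → ℕ) (hc : lam - μ = ∑ i, (c i : ℂ) • D.α i) :
    ∃ (n : ℕ) (μs : ℕ → Module.Dual ℂ D.H) (is : ℕ → 𝓘) (ks : ℕ → ℕ),
      n ≤ ∑ i, c i ∧ μs 0 = μ ∧ μs n = lam ∧
        ∀ t : ℕ, 1 ≤ t → t ≤ n →
          c (is t) ≠ 0 ∧ 0 < ks t ∧ μs t (D.coroot (is t)) = (ks t : ℂ) ∧
            (∃ j : ℕ, j ≤ ks t ∧ μs (t - 1) = μs t - (j : ℂ) • D.α (is t)) ∧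
            (∀ j : ℕ, j ≤ ks t → μs t - (j : ℂ) • D.α (is t) ∈ wtSet D.H V) := by
  have : Nonempty 𝓘 := by
    by_contra h
    rw [not_nonempty_iff] at h
    exact hne (by simpa [sub_eq_zero, eq_comm] using hc)
  exact exists_isStringChain hsimple hV hP c hμ (by rw [rootSum, ← hc, sub_sub_cancel])

/-- Lemma 6.1: for `λ ∈ P⁺` and `λ ≠ μ ∈ wt L(λ)` (here `V` is the
simple highest weight module `L(λ)`), there is a chain of weights
`μ = μ_0 ≼ μ_1 ≼ ⋯ ≼ μ_n = λ` and nodes `i_t ∈ supp(λ−μ)`, `n ≤ ht(λ−μ)`, with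
`⟨μ_t, α_{i_t}^∨⟩ ∈ ℤ>0` and `μ_{t−1} ∈ [s_{i_t}(μ_t), μ_t] ⊆ wt L(λ)` for all `t`. -/
theorem integrable_chain_to_highest_weight
    {𝓘 : Type} [Fintype 𝓘] [DecidableEq 𝓘] {g : Type} [LieRing g] [LieAlgebra ℂ g]
    (D : Data 𝓘 g)
    (V : Type) [AddCommGroup V] [Module ℂ V] [LieRingModule g V] [LieModule ℂ g V]
    (lam : Module.Dual ℂ D.H) (v : V) (hV : IsHW D V lam v)
    (hsimple : ∀ N : LieSubmodule ℂ g V, N = ⊥ ∨ N = ⊤)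
    (hP : ∀ i : 𝓘, ∃ k : ℕ, lam (D.coroot i) = (k : ℂ))
    (μ : Module.Dual ℂ D.H) (hμ : μ ∈ wtSet D.H V) (hne : μ ≠ lam)
    (c : 𝓘 → ℕ) (hc : lam - μ = ∑ i, (c i : ℂ) • D.α i) :
    ∃ (n : ℕ) (μs : ℕ → Module.Dual ℂ D.H) (is : ℕ → 𝓘) (ks : ℕ → ℕ),
      n ≤ ∑ i, c i ∧ μs 0 = μ ∧ μs n = lam ∧
        ∀ t : ℕ, 1 ≤ t → t ≤ n →
          c (is t) ≠ 0 ∧ 0 < ks t ∧ μs t (D.coroot (is t)) = (ks t : ℂ) ∧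
            (∃ j : ℕ, j ≤ ks t ∧ μs (t - 1) = μs t - (j : ℂ) • D.α (is t)) ∧
            (∀ j : ℕ, j ≤ ks t → μs t - (j : ℂ) • D.α (is t) ∈ wtSet D.H V) :=
  integrable_chain_to_highest_weight_general D V lam v hV hsimple hP μ hμ hne c hc

end KM
end
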